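/- Conversely, if f is holomorphic with nonvanishing derivative on a connected open set in ℂ and S(f) = 0 identically, then f is the restriction of a Möbius transformation. -/

import Mathlib

/-!
Write `g = f''/f'`, the logarithmic derivative of `f'`. Then `S(f) = 0` is the Riccati equation
`g' = g²/2`, and `w = 1/f'` satisfies `w' = -g w`, `w'' = (g²/2) w`, `w''' = 0`. So `w` is a
quadratic polynomial on `U`, and the pointwise identity `(w')² = 2 w w''` makes its discriminant
vanish: `1/f' = λ (c z + d)²`. This is `1/T'` for a Möbius transformation `T` with pole off `U`,
so `f - T` is constant on `U`, and a Möbius transformation plus a constant is again one.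
-/

/-- The Schwarzian derivative `S(f) = (f''/f')' - (1/2)(f''/f')²`. -/
noncomputable def schwarzian (f : ℂ → ℂ) (z : ℂ) : ℂ :=
  deriv (fun w => deriv (deriv f) w / deriv f w) z
    - (1 / 2) * (deriv (deriv f) z / deriv f z) ^ 2

section Field

variable {𝕜 : Type*} [NontriviallyNormedField 𝕜]

theorem hasDerivAt_mobius {a b c d x : 𝕜} (h : c * x + d ≠ 0) :
    HasDerivAt (fun y => (a * y + b) / (c * y + d)) ((a * d - b * c) / (c * x + d) ^ 2) x := by
  have h' := (((hasDerivAt_id x).const_mul a).add_const b).div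
    (((hasDerivAt_id x).const_mul c).add_const d) h
  exact h'.congr_deriv (by simp only [mul_one, id_eq]; ring)

theorem DifferentiableAt.hasDerivAt_inv_eq_neg_logDeriv_mul {u : 𝕜 → 𝕜} {x : 𝕜}
    (hu : DifferentiableAt 𝕜 u x) (hx : u x ≠ 0) :
    HasDerivAt (fun y => (u y)⁻¹) (-(logDeriv u x * (u x)⁻¹)) x :=
  (hu.hasDerivAt.inv hx).congr_deriv (by rw [logDeriv_apply]; field_simp)

end Field

section RCLike

variable {𝕜 G : Type*} [RCLike 𝕜] [NormedAddCommGroup G] [NormedSpace 𝕜 G] {s : Set 𝕜}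

theorem IsOpen.eqOn_of_hasDerivAt {f g f' : 𝕜 → G} (hs : IsOpen s) (hs' : IsPreconnected s)
    (hf : ∀ x ∈ s, HasDerivAt f (f' x) x) (hg : ∀ x ∈ s, HasDerivAt g (f' x) x)
    {x₀ : 𝕜} (hx₀ : x₀ ∈ s) (hfg : f x₀ = g x₀) : s.EqOn f g :=
  hs.eqOn_of_deriv_eq hs' (fun x hx => (hf x hx).differentiableAt.differentiableWithinAt)
    (fun x hx => (hg x hx).differentiableAt.differentiableWithinAt)
    (fun x hx => (hf x hx).deriv.trans (hg x hx).deriv.symm) hx₀ hfg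

theorem IsOpen.exists_eq_add_of_hasDerivAt {f g f' : 𝕜 → G} (hs : IsOpen s)
    (hs' : IsPreconnected s) (hf : ∀ x ∈ s, HasDerivAt f (f' x) x)
    (hg : ∀ x ∈ s, HasDerivAt g (f' x) x) : ∃ a, s.EqOn f (g · + a) :=
  hs.exists_eq_add_of_deriv_eq hs' (fun x hx => (hf x hx).differentiableAt.differentiableWithinAt)
    (fun x hx => (hg x hx).differentiableAt.differentiableWithinAt)
    (fun x hx => (hf x hx).deriv.trans (hg x hx).deriv.symm)

theorem hasDerivAt_quadratic (a b c x₀ x : 𝕜) :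
    HasDerivAt (fun x => a / 2 * (x - x₀) ^ 2 + b * (x - x₀) + c) (a * (x - x₀) + b) x := by
  have h := ((((hasDerivAt_id x).sub_const x₀).pow 2).const_mul (a / 2)).add
    (((hasDerivAt_id x).sub_const x₀).const_mul b) |>.add_const c
  exact h.congr_deriv (by
    simp only [Nat.cast_ofNat, id_eq, Nat.add_one_sub_one, pow_one, mul_one, add_left_inj]
    ring)

theorem IsOpen.eqOn_quadratic_of_hasDerivAt {w w₁ w₂ : 𝕜 → 𝕜} {x₀ : 𝕜} (hs : IsOpen s)
    (hs' : IsPreconnected s) (hx₀ : x₀ ∈ s) (hw : ∀ x ∈ s, HasDerivAt w (w₁ x) x)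
    (hw₁ : ∀ x ∈ s, HasDerivAt w₁ (w₂ x) x) (hw₂ : ∀ x ∈ s, HasDerivAt w₂ 0 x) :
    s.EqOn w fun x => w₂ x₀ / 2 * (x - x₀) ^ 2 + w₁ x₀ * (x - x₀) + w x₀ := by
  have h₂ : s.EqOn w₂ fun _ => w₂ x₀ :=
    hs.eqOn_of_hasDerivAt hs' hw₂ (fun x _ => hasDerivAt_const x _) hx₀ rfl
  have h₁ : s.EqOn w₁ fun x => w₂ x₀ * (x - x₀) + w₁ x₀ := by
    refine hs.eqOn_of_hasDerivAt hs' (fun x hx => (hw₁ x hx).congr_deriv (h₂ hx))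
      (fun x _ => ?_) hx₀ (by simp)
    exact (((hasDerivAt_id x).sub_const x₀).const_mul _ |>.add_const _).congr_deriv (by simp)
  exact hs.eqOn_of_hasDerivAt hs' (fun x hx => (hw x hx).congr_deriv (h₁ hx))
    (fun x _ => hasDerivAt_quadratic _ _ _ x₀ x) hx₀ (by simp)

theorem IsOpen.exists_mobius_of_hasDerivAt {f : 𝕜 → 𝕜} {μ c d x₀ : 𝕜} (hs : IsOpen s)
    (hs' : IsPreconnected s) (hx₀ : x₀ ∈ s) (hcd : ∀ x ∈ s, c * x + d ≠ 0)
    (hf : ∀ x ∈ s, HasDerivAt f (μ / (c * x + d) ^ 2) x) :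
    ∃ a b, a * d - b * c = μ ∧ s.EqOn f fun x => (a * x + b) / (c * x + d) := by
  obtain ⟨a, b, hdet⟩ : ∃ a b : 𝕜, a * d - b * c = μ := by
    rcases eq_or_ne d 0 with rfl | hd
    · have hc : c ≠ 0 := left_ne_zero_of_mul (by simpa using hcd x₀ hx₀)
      exact ⟨0, -μ / c, by simp [hc]⟩
    · exact ⟨μ / d, 0, by simp [hd]⟩
  obtain ⟨e, he⟩ := hs.exists_eq_add_of_hasDerivAt hs' hf
    fun x hx => hdet ▸ hasDerivAt_mobius (hcd x hx)
  refine ⟨a + e * c, b + e * d, by rw [← hdet]; ring, fun x hx => ?_⟩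
  rw [he hx]
  dsimp only
  rw [div_add' _ _ _ (hcd x hx)]
  ring

section Riccati

variable {g w : 𝕜 → 𝕜} {x : 𝕜}

theorem hasDerivAt_neg_mul_of_riccati (hg : HasDerivAt g (g x ^ 2 / 2) x)
    (hw : HasDerivAt w (-(g x * w x)) x) :
    HasDerivAt (fun y => -(g y * w y)) (g x ^ 2 / 2 * w x) x :=
  (hg.mul hw).neg.congr_deriv (by ring)

theorem hasDerivAt_sq_div_two_mul_of_riccati (hg : HasDerivAt g (g x ^ 2 / 2) x)
    (hw : HasDerivAt w (-(g x * w x)) x) :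
    HasDerivAt (fun y => g y ^ 2 / 2 * w y) 0 x :=
  (((hg.pow 2).div_const 2).mul hw).congr_deriv (by
    simp only [Nat.cast_ofNat, Nat.add_one_sub_one, pow_one, Pi.pow_apply, mul_neg]
    ring)

end Riccati

end RCLike

theorem exists_mul_sq_of_discrim_eq_zero {K : Type*} [Field K] [NeZero (2 : K)] {a b c : K}
    (h : discrim a b c = 0) : ∃ l p q : K, ∀ x, a * (x * x) + b * x + c = l * (p * x + q) ^ 2 := by
  rcases eq_or_ne a 0 with rfl | ha
  · have hb : b = 0 := pow_eq_zero_iff two_ne_zero |>.mp (by simpa [discrim] using h)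
    exact ⟨c, 0, 1, fun x => by simp [hb]⟩
  · refine ⟨a, 1, b / (2 * a), fun x => ?_⟩
    rw [discrim, sub_eq_zero] at h
    field_simp
    linear_combination -h

theorem schwarzian_eq_logDeriv (f : ℂ → ℂ) (z : ℂ) :
    schwarzian f z = deriv (logDeriv (deriv f)) z - logDeriv (deriv f) z ^ 2 / 2 := by
  have hlog : (fun w => deriv (deriv f) w / deriv f w) = logDeriv (deriv f) := rfl
  rw [schwarzian, hlog, logDeriv_apply]
  ring

theorem hasDerivAt_logDeriv_deriv_of_schwarzian_eq_zero {f : ℂ → ℂ} {z : ℂ}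
    (hd : DifferentiableAt ℂ (logDeriv (deriv f)) z) (hS : schwarzian f z = 0) :
    HasDerivAt (logDeriv (deriv f)) (logDeriv (deriv f) z ^ 2 / 2) z :=
  hd.hasDerivAt.congr_deriv (by rw [schwarzian_eq_logDeriv] at hS; linear_combination hS)

theorem exists_inv_deriv_eq_quadratic_of_schwarzian_eq_zero {U : Set ℂ} {f : ℂ → ℂ} {z₀ : ℂ}
    (hU : IsOpen U) (hU' : IsPreconnected U)
    (hz₀ : z₀ ∈ U) (hf : AnalyticOnNhd ℂ f U) (hf' : ∀ z ∈ U, deriv f z ≠ 0)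
    (hS : ∀ z ∈ U, schwarzian f z = 0) :
    ∃ a b c, discrim a b c = 0 ∧
      ∀ z ∈ U, (deriv f z)⁻¹ = a * ((z - z₀) * (z - z₀)) + b * (z - z₀) + c := by
  set g := logDeriv (deriv f)
  set w := fun z => (deriv f z)⁻¹
  have hg : ∀ z ∈ U, HasDerivAt g (g z ^ 2 / 2) z := fun z hz =>
    hasDerivAt_logDeriv_deriv_of_schwarzian_eq_zero
      ((hf z hz).deriv.deriv.differentiableAt.div (hf z hz).deriv.differentiableAt (hf' z hz))
      (hS z hz)
  have hw : ∀ z ∈ U, HasDerivAt w (-(g z * w z)) z := fun z hz =>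
    (hf z hz).deriv.differentiableAt.hasDerivAt_inv_eq_neg_logDeriv_mul (hf' z hz)
  have hquad := hU.eqOn_quadratic_of_hasDerivAt hU' hz₀ hw
    (fun z hz => hasDerivAt_neg_mul_of_riccati (hg z hz) (hw z hz))
    (fun z hz => hasDerivAt_sq_div_two_mul_of_riccati (hg z hz) (hw z hz))
  refine ⟨g z₀ ^ 2 / 2 * w z₀ / 2, -(g z₀ * w z₀), w z₀, by rw [discrim]; ring,
    fun z hz => (hquad hz).trans (by ring)⟩

/-- If `f` is holomorphic with nonvanishing derivative on a connected open set `U ⊆ ℂ`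
and its Schwarzian derivative vanishes identically on `U`, then `f` is the restriction
of a Möbius transformation. -/
theorem eq_mobius_of_schwarzian_eq_zero
    (U : Set ℂ) (hU : IsOpen U) (hUconn : IsPreconnected U)
    (f : ℂ → ℂ) (hf : DifferentiableOn ℂ f U)
    (hf' : ∀ z ∈ U, deriv f z ≠ 0)
    (hS : ∀ z ∈ U, schwarzian f z = 0) :
    ∃ a b c d : ℂ, a * d - b * c ≠ 0 ∧ ∀ z ∈ U, f z = (a * z + b) / (c * z + d) := by
  rcases U.eq_empty_or_nonempty with rfl | ⟨z₀, hz₀⟩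
  · exact ⟨1, 0, 0, 1, by norm_num, by simp⟩
  have hfa := hf.analyticOnNhd hU
  obtain ⟨a, b, c, hdisc, hquad⟩ :=
    exists_inv_deriv_eq_quadratic_of_schwarzian_eq_zero hU hUconn hz₀ hfa hf' hS
  obtain ⟨l, p, q, hsq⟩ := exists_mul_sq_of_discrim_eq_zero hdisc
  have hw : ∀ z ∈ U, (deriv f z)⁻¹ = l * (p * z + (q - p * z₀)) ^ 2 := fun z hz => by
    rw [hquad z hz, hsq]
    ring
  have hl : l ≠ 0 := left_ne_zero_of_mul (hw z₀ hz₀ ▸ inv_ne_zero (hf' z₀ hz₀))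
  have hpole : ∀ z ∈ U, p * z + (q - p * z₀) ≠ 0 := fun z hz =>
    pow_ne_zero_iff two_ne_zero |>.mp (right_ne_zero_of_mul (hw z hz ▸ inv_ne_zero (hf' z hz)))
  have hderiv : ∀ z ∈ U, HasDerivAt f (l⁻¹ / (p * z + (q - p * z₀)) ^ 2) z := fun z hz => by
    have := (hfa z hz).differentiableAt.hasDerivAt
    rwa [← inv_inv (deriv f z), hw z hz, mul_inv, ← div_eq_mul_inv] at this
  obtain ⟨a, b, hdet, hmob⟩ := hU.exists_mobius_of_hasDerivAt hUconn hz₀ hpole hderiv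
  exact ⟨a, b, p, _, hdet ▸ inv_ne_zero hl, hmob⟩
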